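/- The focal radius of a complete Riemannian manifold is at most half its conjugate radius: Foc(X) ≤ Conj(X)/2. -/

import Mathlib

/-!
The norm `j` of a Jacobi field vanishing at `0` and at `T > 0` has, by Rolle's argument, an
interior local extremum `t`, where `deriv j t = 0`. If `t ≤ T / 2` this is a focal point at
distance `t`; otherwise reversing the geodesic from `c T` turns `T - t < T / 2` into one.
-/

open scoped ENNReal

/-- Abstract interface for the Jacobi-field data of a complete Riemannian manifold `X`
(Mathlib does not yet provide Riemannian metrics and Jacobi fields).
`IsNormalJacobiNorm c j` is to be read as: `c : ℝ → X` is a unit-speed geodesic and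
`j = ‖J‖` for some nonzero normal Jacobi field `J` along `c`. -/
structure JacobiStructure (X : Type*) [MetricSpace X] where
  IsNormalJacobiNorm : (ℝ → X) → (ℝ → ℝ) → Prop

/-- The conjugate radius of `X`: the infimum over `x ∈ X` of the minimal `T > 0` such
that some unit-speed geodesic `c` with `c 0 = x` carries a nonzero normal Jacobi field
`J` with `J(0) = 0 = J(T)`; `∞` if no such `T` exists. -/
noncomputable def conjRadius {X : Type*} [MetricSpace X] (JS : JacobiStructure X) : ℝ≥0∞ :=
  ⨅ x : X, sInf {T : ℝ≥0∞ | ∃ Tr : ℝ, T = ENNReal.ofReal Tr ∧ 0 < Tr ∧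
    ∃ c j, JS.IsNormalJacobiNorm c j ∧ c 0 = x ∧ j 0 = 0 ∧ j Tr = 0}

/-- The focal radius of `X`: the infimum over `x ∈ X` of the minimal `T > 0` such that
some unit-speed geodesic `c` with `c 0 = x` carries a nonzero normal Jacobi field `J`
with `J(0) = 0` and `(d/dt)‖J‖(T) = 0`; `∞` if no such `T` exists. -/
noncomputable def focRadius {X : Type*} [MetricSpace X] (JS : JacobiStructure X) : ℝ≥0∞ :=
  ⨅ x : X, sInf {T : ℝ≥0∞ | ∃ Tr : ℝ, T = ENNReal.ofReal Tr ∧ 0 < Tr ∧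
    ∃ c j, JS.IsNormalJacobiNorm c j ∧ c 0 = x ∧ j 0 = 0 ∧ deriv j Tr = 0}

theorem IsLocalExtr.comp_sub_left {f : ℝ → ℝ} {t : ℝ} (hf : IsLocalExtr f t) (T : ℝ) :
    IsLocalExtr (fun s => f (T - s)) (T - t) := by
  rw [← sub_sub_cancel T t] at hf
  exact hf.comp_continuous (continuous_sub_left T).continuousAt

section JacobiStructure

variable {X : Type*} [MetricSpace X] {JS : JacobiStructure X}

theorem focRadius_le_of_deriv_eq_zero {c : ℝ → X} {j : ℝ → ℝ} {T : ℝ}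
    (hJ : JS.IsNormalJacobiNorm c j) (hj0 : j 0 = 0) (hT : 0 < T) (hjT : deriv j T = 0) :
    focRadius JS ≤ ENNReal.ofReal T :=
  (iInf_le _ (c 0)).trans <| sInf_le ⟨T, rfl, hT, c, j, hJ, rfl, hj0, hjT⟩

theorem le_conjRadius {a : ℝ≥0∞}
    (h : ∀ c j T, JS.IsNormalJacobiNorm c j → j 0 = 0 → 0 < T → j T = 0 →
      a ≤ ENNReal.ofReal T) :
    a ≤ conjRadius JS := by
  refine le_iInf fun _ => le_sInf ?_
  rintro _ ⟨T, rfl, hT, c, j, hJ, -, hj0, hjT⟩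
  exact h c j T hJ hj0 hT hjT

theorem focRadius_le_half_of_conjugate
    (hcont : ∀ c j, JS.IsNormalJacobiNorm c j → Continuous j)
    (hrev : ∀ c j (S : ℝ), JS.IsNormalJacobiNorm c j →
      JS.IsNormalJacobiNorm (fun t => c (S - t)) (fun t => j (S - t)))
    {c : ℝ → X} {j : ℝ → ℝ} {T : ℝ} (hJ : JS.IsNormalJacobiNorm c j)
    (hj0 : j 0 = 0) (hT : 0 < T) (hjT : j T = 0) :
    focRadius JS ≤ ENNReal.ofReal (T / 2) := by
  obtain ⟨t, ⟨ht0, htT⟩, hext⟩ :=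
    exists_isLocalExtr_Ioo hT (hcont c j hJ).continuousOn (hj0.trans hjT.symm)
  rcases le_total t (T / 2) with hle | hle
  · exact (focRadius_le_of_deriv_eq_zero hJ hj0 ht0 hext.deriv_eq_zero).trans
      (ENNReal.ofReal_le_ofReal hle)
  · have hfoc := focRadius_le_of_deriv_eq_zero (hrev c j T hJ) (by simpa using hjT)
      (sub_pos.2 htT) (hext.comp_sub_left T).deriv_eq_zero
    exact hfoc.trans (ENNReal.ofReal_le_ofReal (by linarith))

end JacobiStructure

theorem focRadius_le_half_conjRadius_general
    {X : Type*} [MetricSpace X] (JS : JacobiStructure X)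
    (hcont : ∀ c j, JS.IsNormalJacobiNorm c j → Continuous j)
    (hrev : ∀ c j (S : ℝ), JS.IsNormalJacobiNorm c j →
      JS.IsNormalJacobiNorm (fun t => c (S - t)) (fun t => j (S - t))) :
    focRadius JS ≤ conjRadius JS / 2 := by
  rw [ENNReal.le_div_iff_mul_le (Or.inl two_ne_zero) (Or.inl ENNReal.ofNat_ne_top)]
  refine le_conjRadius fun c j T hJ hj0 hT hjT => ?_
  calc focRadius JS * 2
      ≤ ENNReal.ofReal (T / 2) * 2 := by
        gcongr; exact focRadius_le_half_of_conjugate hcont hrev hJ hj0 hT hjT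
    _ = ENNReal.ofReal T := by
        rw [← ENNReal.ofReal_ofNat 2, ← ENNReal.ofReal_mul (by positivity),
          div_mul_cancel₀ _ two_ne_zero]

/-- The focal radius of a complete Riemannian manifold is at most half its conjugate
radius: `Foc(X) ≤ Conj(X)/2`.  The hypotheses record the standard facts about norms of
Jacobi fields used in the proof: nonnegativity, differentiability, vanishing only at
isolated points, and invariance under reversal of the geodesic. -/
theorem focRadius_le_half_conjRadius
    {X : Type*} [MetricSpace X] [CompleteSpace X] (JS : JacobiStructure X)
    (hnonneg : ∀ c j, JS.IsNormalJacobiNorm c j → ∀ t, 0 ≤ j t)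
    (hdiff : ∀ c j, JS.IsNormalJacobiNorm c j → ∀ t, j t ≠ 0 → DifferentiableAt ℝ j t)
    (hcont : ∀ c j, JS.IsNormalJacobiNorm c j → Continuous j)
    (hne : ∀ c j, JS.IsNormalJacobiNorm c j → ∀ a b : ℝ, a < b → j a = 0 → j b = 0 →
      ∃ t ∈ Set.Ioo a b, j t ≠ 0)
    (hrev : ∀ c j (S : ℝ), JS.IsNormalJacobiNorm c j →
      JS.IsNormalJacobiNorm (fun t => c (S - t)) (fun t => j (S - t))) :
    focRadius JS ≤ conjRadius JS / 2 :=
  focRadius_le_half_conjRadius_general JS hcont hrev
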